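/- For all 0 < k < 2, J > 0 and M > 0, the energy infimum satisfies I^k_{M,J} ≤ M; that is, for every ε > 0 there exists an admissible pair (f,φ) with 𝓔(f,φ) < M + ε. -/

import Mathlib

/-!
Take `φ = 0` and let `f` spread the mass `M` uniformly over positions `|x| ≤ R` and momenta
`|p| ≤ δ`. The field energy vanishes and the kinetic energy is at most `√(1 + δ²) M`, which is
below `M + ε` for small `δ`. Since `‖f‖_{L^q} = M |S|^{1/q - 1}` with `q = 1 + 1/k > 1` and `S` the
support of `f`, letting `R → ∞` makes the `L^q` bound `J` hold.
-/

open MeasureTheory Real Filter Topology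
open scoped ENNReal

noncomputable section

/-- Euclidean 3-space. -/
abbrev E3 := EuclideanSpace ℝ (Fin 3)

/-- `φ` belongs to (a C¹ surrogate of) the space `D¹(ℝ³)`: it is continuously
differentiable, its gradient is square integrable and it vanishes at infinity in
the sense that `{|φ| > a}` has finite measure for every `a > 0`. -/
def IsPotential (φ : E3 → ℝ) : Prop :=
  ContDiff ℝ 1 φ ∧ (∫⁻ x : E3, ENNReal.ofReal (‖gradient φ x‖ ^ 2)) < ⊤ ∧
    ∀ a : ℝ, 0 < a → volume {x : E3 | a < |φ x|} < ⊤

/-- `f ∈ Γ^k_{M,J}`: `f` is measurable, a.e. nonnegative, with `‖f‖_{L¹} = M` and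
`‖f‖_{L^{1+1/k}} ≤ J` (in particular `f ∈ L¹ ∩ L^{1+1/k}`). -/
def InGamma (k M J : ℝ) (f : E3 → E3 → ℝ) : Prop :=
  Measurable (Function.uncurry f) ∧
  (∀ᵐ z : E3 × E3, 0 ≤ f z.1 z.2) ∧
  (∫⁻ z : E3 × E3, ENNReal.ofReal (f z.1 z.2)) = ENNReal.ofReal M ∧
  eLpNorm (Function.uncurry f) (ENNReal.ofReal (1 + 1/k)) volume ≤ ENNReal.ofReal J

/-- Kinetic energy `E_kin(f,φ) = ∫∫ √(e^{2φ(x)}+|p|²) f(x,p) dp dx` (value in `[0,∞]`). -/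
def kinE (f : E3 → E3 → ℝ) (φ : E3 → ℝ) : ℝ≥0∞ :=
  ∫⁻ z : E3 × E3, ENNReal.ofReal (Real.sqrt (Real.exp (2 * φ z.1) + ‖z.2‖ ^ 2) * f z.1 z.2)

/-- Energy functional `𝓔(f,φ) = E_kin(f,φ) + (1/2)∫ |∇φ|²` (value in `[0,∞]`). -/
def energy (f : E3 → E3 → ℝ) (φ : E3 → ℝ) : ℝ≥0∞ :=
  kinE f φ + (∫⁻ x : E3, ENNReal.ofReal (‖gradient φ x‖ ^ 2)) / 2

/-- `(f,φ)` is admissible: `f ∈ Γ^k_{M,J}`, `φ` is a potential and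
`∫∫ √(1+|p|²) f dp dx < ∞`. -/
def Admissible (k M J : ℝ) (f : E3 → E3 → ℝ) (φ : E3 → ℝ) : Prop :=
  InGamma k M J f ∧ IsPotential φ ∧
  (∫⁻ z : E3 × E3, ENNReal.ofReal (Real.sqrt (1 + ‖z.2‖ ^ 2) * f z.1 z.2)) < ⊤

/-- The energy infimum `I^k_{M,J} = inf {𝓔(f,φ) : (f,φ) admissible}`. -/
def energyInf (k M J : ℝ) : ℝ≥0∞ :=
  sInf { e : ℝ≥0∞ | ∃ f φ, Admissible k M J f φ ∧ e = energy f φ }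

theorem tendsto_measure_closedBall_atTop {G : Type*} [NormedAddCommGroup G] [MeasurableSpace G]
    [BorelSpace G] [WeaklyLocallyCompactSpace G] [NoncompactSpace G] (μ : Measure G)
    [μ.IsOpenPosMeasure] [μ.IsAddLeftInvariant] :
    Tendsto (fun R : ℝ => μ (Metric.closedBall (0 : G) R)) atTop (𝓝 ∞) := by
  have hunion : ⋃ R : ℝ, Metric.closedBall (0 : G) R = Set.univ :=
    Set.eq_univ_of_forall fun x => Set.mem_iUnion.2 ⟨‖x‖, by simp⟩
  have := tendsto_measure_iUnion_atTop (μ := μ)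
    (fun _ _ h => Metric.closedBall_subset_closedBall h : Monotone (Metric.closedBall (0 : G)))
  rwa [hunion, measure_univ_of_isAddLeftInvariant] at this

section UniformDensity

variable {α : Type*} [MeasurableSpace α]

def uniformDensity (μ : Measure α) (S : Set α) (M : ℝ) : α → ℝ :=
  S.indicator fun _ => M / (μ S).toReal

variable {μ : Measure α} {S : Set α} {M : ℝ}

theorem uniformDensity_nonneg (hM : 0 ≤ M) (z : α) : 0 ≤ uniformDensity μ S M z :=
  Set.indicator_nonneg (fun _ _ => div_nonneg hM ENNReal.toReal_nonneg) z

theorem mem_of_uniformDensity_ne_zero {z : α} (hz : uniformDensity μ S M z ≠ 0) : z ∈ S :=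
  Set.mem_of_indicator_ne_zero hz

theorem measurable_uniformDensity (hS : MeasurableSet S) : Measurable (uniformDensity μ S M) :=
  measurable_const.indicator hS

theorem ofReal_uniformDensity (h0 : μ S ≠ 0) (htop : μ S ≠ ∞) (z : α) :
    ENNReal.ofReal (uniformDensity μ S M z) = S.indicator (fun _ => ENNReal.ofReal M / μ S) z := by
  by_cases hz : z ∈ S
  · rw [uniformDensity, Set.indicator_of_mem hz, Set.indicator_of_mem hz,
      ENNReal.ofReal_div_of_pos (ENNReal.toReal_pos h0 htop), ENNReal.ofReal_toReal htop]
  · simp [uniformDensity, Set.indicator_of_notMem hz]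

theorem lintegral_ofReal_uniformDensity (hS : MeasurableSet S) (h0 : μ S ≠ 0) (htop : μ S ≠ ∞) :
    ∫⁻ z, ENNReal.ofReal (uniformDensity μ S M z) ∂μ = ENNReal.ofReal M := by
  simp_rw [ofReal_uniformDensity h0 htop, lintegral_indicator_const hS,
    ENNReal.div_mul_cancel h0 htop]

theorem eLpNorm_uniformDensity (hS : MeasurableSet S) (h0 : μ S ≠ 0) (htop : μ S ≠ ∞)
    (hM : 0 ≤ M) {p : ℝ≥0∞} (hp0 : p ≠ 0) (hptop : p ≠ ∞) :
    eLpNorm (uniformDensity μ S M) p μ = ENNReal.ofReal M * μ S ^ (1 / p.toReal - 1) := by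
  rw [uniformDensity, eLpNorm_indicator_const hS hp0 hptop, ENNReal.rpow_sub _ _ h0 htop,
    ENNReal.rpow_one, Real.enorm_eq_ofReal (div_nonneg hM ENNReal.toReal_nonneg),
    ENNReal.ofReal_div_of_pos (ENNReal.toReal_pos h0 htop), ENNReal.ofReal_toReal htop,
    ENNReal.mul_comm_div]

theorem tendsto_eLpNorm_uniformDensity {ι : Type*} {l : Filter ι} {S : ι → Set α}
    (hS : ∀ i, MeasurableSet (S i)) (htop : ∀ i, μ (S i) ≠ ∞)
    (hlim : Tendsto (fun i => μ (S i)) l (𝓝 ∞)) (hM : 0 ≤ M) {p : ℝ≥0∞} (hp : 1 < p)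
    (hptop : p ≠ ∞) : Tendsto (fun i => eLpNorm (uniformDensity μ (S i) M) p μ) l (𝓝 0) := by
  have hexp : 1 / p.toReal - 1 < 0 := by
    have : 1 < p.toReal := by
      simpa using (ENNReal.toReal_lt_toReal ENNReal.one_ne_top hptop).2 hp
    rw [sub_neg, div_lt_one (by linarith)]
    exact this
  have hpow : Tendsto (fun i => ENNReal.ofReal M * μ (S i) ^ (1 / p.toReal - 1)) l (𝓝 0) := by
    have := ENNReal.Tendsto.const_mul (a := ENNReal.ofReal M)
      (((ENNReal.continuous_rpow_const (y := 1 / p.toReal - 1)).tendsto ∞).comp hlim)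
      (Or.inr ENNReal.ofReal_ne_top)
    rwa [ENNReal.top_rpow_of_neg hexp, mul_zero] at this
  refine hpow.congr' ?_
  filter_upwards [hlim.eventually_ne ENNReal.top_ne_zero] with i hi
  rw [eLpNorm_uniformDensity (hS i) hi (htop i) hM (by positivity) hptop]

end UniformDensity

theorem lintegral_ofReal_mul_le_of_le_on_support {α : Type*} [MeasurableSpace α] {μ : Measure α}
    {f g : α → ℝ} {C : ℝ} (hf : ∀ z, 0 ≤ f z) (hg : ∀ z, f z ≠ 0 → g z ≤ C) :
    ∫⁻ z, ENNReal.ofReal (g z * f z) ∂μ ≤ ENNReal.ofReal C * ∫⁻ z, ENNReal.ofReal (f z) ∂μ := by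
  rw [← lintegral_const_mul' _ _ ENNReal.ofReal_ne_top]
  refine lintegral_mono fun z => ?_
  rw [← ENNReal.ofReal_mul' (hf z)]
  refine ENNReal.ofReal_le_ofReal ?_
  rcases eq_or_ne (f z) 0 with hz | hz
  · simp [hz]
  · exact mul_le_mul_of_nonneg_right (hg z hz) (hf z)

theorem lintegral_sq_norm_gradient_zero :
    ∫⁻ x : E3, ENNReal.ofReal (‖gradient (0 : E3 → ℝ) x‖ ^ 2) = 0 := by
  simp [gradient]

theorem isPotential_zero : IsPotential 0 := by
  refine ⟨contDiff_const, ?_, fun a ha => ?_⟩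
  · rw [lintegral_sq_norm_gradient_zero]
    exact ENNReal.zero_lt_top
  · simp [not_lt.2 ha.le]

theorem energy_zero_right (f : E3 → E3 → ℝ) :
    energy f 0 = ∫⁻ z : E3 × E3, ENNReal.ofReal (√(1 + ‖z.2‖ ^ 2) * f z.1 z.2) := by
  rw [energy, lintegral_sq_norm_gradient_zero, ENNReal.zero_div, add_zero, kinE]
  simp only [Pi.zero_apply, mul_zero, exp_zero]

section BallDensity

variable {M R δ : ℝ}

def ballDensity (M R δ : ℝ) : E3 → E3 → ℝ := fun x p =>
  uniformDensity volume (Metric.closedBall (0 : E3) R ×ˢ Metric.closedBall (0 : E3) δ) M (x, p)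

theorem volume_closedBall_prod (R δ : ℝ) :
    volume (Metric.closedBall (0 : E3) R ×ˢ Metric.closedBall (0 : E3) δ) =
      volume (Metric.closedBall (0 : E3) R) * volume (Metric.closedBall (0 : E3) δ) := by
  rw [Measure.volume_eq_prod, Measure.prod_prod]

theorem volume_closedBall_prod_ne_zero (hR : 0 < R) (hδ : 0 < δ) :
    volume (Metric.closedBall (0 : E3) R ×ˢ Metric.closedBall (0 : E3) δ) ≠ 0 := by
  rw [volume_closedBall_prod]
  exact mul_ne_zero (Metric.measure_closedBall_pos _ _ hR).ne'
    (Metric.measure_closedBall_pos _ _ hδ).ne'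

theorem volume_closedBall_prod_ne_top (R δ : ℝ) :
    volume (Metric.closedBall (0 : E3) R ×ˢ Metric.closedBall (0 : E3) δ) ≠ ∞ := by
  rw [volume_closedBall_prod]
  exact ENNReal.mul_ne_top measure_closedBall_lt_top.ne measure_closedBall_lt_top.ne

theorem measurableSet_closedBall_prod (R δ : ℝ) :
    MeasurableSet (Metric.closedBall (0 : E3) R ×ˢ Metric.closedBall (0 : E3) δ) :=
  measurableSet_closedBall.prod measurableSet_closedBall

theorem lintegral_sqrt_mul_ballDensity_le (hR : 0 < R) (hδ : 0 < δ) (hM : 0 ≤ M) :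
    ∫⁻ z : E3 × E3, ENNReal.ofReal (√(1 + ‖z.2‖ ^ 2) * ballDensity M R δ z.1 z.2) ≤
      ENNReal.ofReal (√(1 + δ ^ 2) * M) := by
  calc _ ≤ ENNReal.ofReal √(1 + δ ^ 2) *
        ∫⁻ z : E3 × E3, ENNReal.ofReal (ballDensity M R δ z.1 z.2) := by
        refine lintegral_ofReal_mul_le_of_le_on_support (fun z => uniformDensity_nonneg hM z)
          fun z hz => ?_
        have hp : ‖z.2‖ ≤ δ := by
          simpa using (mem_of_uniformDensity_ne_zero hz).2
        gcongr
    _ = ENNReal.ofReal (√(1 + δ ^ 2) * M) := by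
        rw [ENNReal.ofReal_mul (sqrt_nonneg _)]
        congr 1
        exact lintegral_ofReal_uniformDensity (measurableSet_closedBall_prod R δ)
          (volume_closedBall_prod_ne_zero hR hδ) (volume_closedBall_prod_ne_top R δ)

theorem admissible_ballDensity {k J : ℝ} (hR : 0 < R) (hδ : 0 < δ) (hM : 0 ≤ M)
    (hLq : eLpNorm (Function.uncurry (ballDensity M R δ)) (ENNReal.ofReal (1 + 1 / k)) volume ≤
      ENNReal.ofReal J) :
    Admissible k M J (ballDensity M R δ) 0 := by
  refine ⟨⟨measurable_uniformDensity (measurableSet_closedBall_prod R δ),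
    .of_forall fun z => uniformDensity_nonneg hM z, ?_, hLq⟩, isPotential_zero, ?_⟩
  · exact lintegral_ofReal_uniformDensity (measurableSet_closedBall_prod R δ)
      (volume_closedBall_prod_ne_zero hR hδ) (volume_closedBall_prod_ne_top R δ)
  · exact (lintegral_sqrt_mul_ballDensity_le hR hδ hM).trans_lt ENNReal.ofReal_lt_top

theorem tendsto_eLpNorm_ballDensity (hδ : 0 < δ) (hM : 0 ≤ M) {p : ℝ≥0∞} (hp : 1 < p)
    (hptop : p ≠ ∞) :
    Tendsto (fun R => eLpNorm (Function.uncurry (ballDensity M R δ)) p volume) atTop (𝓝 0) := by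
  refine tendsto_eLpNorm_uniformDensity (measurableSet_closedBall_prod · δ)
    (volume_closedBall_prod_ne_top · δ) ?_ hM hp hptop
  simp_rw [volume_closedBall_prod]
  have hlim := ENNReal.Tendsto.mul_const (tendsto_measure_closedBall_atTop (volume : Measure E3))
    (Or.inr (measure_closedBall_lt_top (μ := volume) (x := (0 : E3)) (r := δ)).ne)
  rwa [ENNReal.top_mul (Metric.measure_closedBall_pos volume (0 : E3) hδ).ne'] at hlim

end BallDensity

theorem exists_sqrt_one_add_sq_mul_lt {M ε : ℝ} (hε : 0 < ε) :
    ∃ δ > 0, √(1 + δ ^ 2) * M < M + ε := by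
  have hlim : Tendsto (fun δ : ℝ => √(1 + δ ^ 2) * M) (𝓝[>] 0) (𝓝 M) := by
    have hcont : Continuous fun δ : ℝ => √(1 + δ ^ 2) * M := by fun_prop
    simpa using (hcont.tendsto 0).mono_left nhdsWithin_le_nhds
  exact ((hlim.eventually (gt_mem_nhds (by linarith))).and self_mem_nhdsWithin).exists.imp
    fun δ h => ⟨h.2, h.1⟩

theorem exists_admissible_energy_lt {k M J ε : ℝ} (hk : 0 < k) (hM : 0 ≤ M) (hJ : 0 < J)
    (hε : 0 < ε) : ∃ f φ, Admissible k M J f φ ∧ energy f φ < ENNReal.ofReal (M + ε) := by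
  obtain ⟨δ, hδ, hδM⟩ := exists_sqrt_one_add_sq_mul_lt (M := M) hε
  have hp : 1 < ENNReal.ofReal (1 + 1 / k) := by
    rw [← ENNReal.ofReal_one, ENNReal.ofReal_lt_ofReal_iff (by positivity)]
    simpa using hk
  obtain ⟨R, hR, hLq⟩ := ((eventually_gt_atTop 0).and
    ((tendsto_eLpNorm_ballDensity hδ hM hp ENNReal.ofReal_ne_top).eventually
      (ge_mem_nhds (ENNReal.ofReal_pos.2 hJ)))).exists
  refine ⟨ballDensity M R δ, 0, admissible_ballDensity hR hδ hM hLq, ?_⟩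
  rw [energy_zero_right]
  exact (lintegral_sqrt_mul_ballDensity_le hR hδ hM).trans_lt
    ((ENNReal.ofReal_lt_ofReal_iff (by linarith)).2 hδM)

theorem energyInf_le_mass_general (k M J : ℝ) (hk : 0 < k) (hM : 0 < M) (hJ : 0 < J) :
    energyInf k M J ≤ ENNReal.ofReal M ∧
    ∀ ε : ℝ, 0 < ε → ∃ f φ, Admissible k M J f φ ∧ energy f φ < ENNReal.ofReal (M + ε) := by
  refine ⟨ENNReal.le_of_forall_pos_le_add fun ε hε _ => ?_,
    fun ε hε => exists_admissible_energy_lt hk hM.le hJ hε⟩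
  obtain ⟨f, φ, hadm, hlt⟩ := exists_admissible_energy_lt hk hM.le hJ (NNReal.coe_pos.2 hε)
  calc energyInf k M J ≤ energy f φ := sInf_le ⟨f, φ, hadm, rfl⟩
    _ ≤ ENNReal.ofReal (M + ε) := hlt.le
    _ = ENNReal.ofReal M + ε := by
      rw [ENNReal.ofReal_add hM.le ε.coe_nonneg, ENNReal.ofReal_coe_nnreal]

/-- the energy infimum satisfies `I^k_{M,J} ≤ M`; that is, for every
`ε > 0` there is an admissible pair of energy `< M + ε`. -/
theorem energyInf_le_mass (k M J : ℝ) (hk : 0 < k) (hk2 : k < 2) (hM : 0 < M) (hJ : 0 < J) :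
    energyInf k M J ≤ ENNReal.ofReal M ∧
    ∀ ε : ℝ, 0 < ε → ∃ f φ, Admissible k M J f φ ∧ energy f φ < ENNReal.ofReal (M + ε) :=
  energyInf_le_mass_general k M J hk hM hJ
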